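/- Let ι be a finite index set, and for each i ∈ ι let G_i be a finite commutative group with n_i elements. Let L be a positive integer such that every element of every G_i has order dividing L. Let H be a commutative group generated by a finite set of at most r elements, and let φ : H → ∏_{i∈ι} G_i be a group homomorphism. For each i ∈ ι let m_i be an integer with 1 ≤ m_i ≤ n_i, and choose independently, for each i, a subset s_i of G_i uniformly at random among all m_i-element subsets of G_i. Then the probability that there exists h ∈ H with φ(h)_i ∈ s_i for every i ∈ ι is at most L^r · ∏_{i∈ι} (m_i/n_i). -/

import Mathlib

/-!
Every element of `∏ i, G i` is killed by `L`, so each element of `φ(H)` is a product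
`∏ s ∈ S, φ(s) ^ e_s` with `0 ≤ e_s < L`, and `φ(H)` has at most `L ^ r` elements. A union bound
over these points reduces the claim to a fixed `x`; by independence the probability that
`x i ∈ s i` for all `i` is the product of the marginals, and a uniform `m`-element subset of an
`n`-element set contains a given point with probability `m / n`.
-/

open Finset

theorem Subgroup.exists_finset_card_le_pow_closure_subset {K : Type*} [CommGroup K] {L : ℕ}
    (hL : 0 < L) (hexp : ∀ g : K, g ^ L = 1) (T : Finset K) :
    ∃ F : Finset K, #F ≤ L ^ #T ∧ (closure (T : Set K) : Set K) ⊆ F := by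
  classical
  refine ⟨univ.image fun e : T → Fin L => ∏ t : T, t.1 ^ (e t : ℕ),
    card_image_le.trans (by simp), ?_⟩
  intro x hx
  have hfin : ∀ g ∈ (T : Set K), IsOfFinOrder g :=
    fun g _ => isOfFinOrder_iff_pow_eq_one.2 ⟨L, hL, hexp g⟩
  have hx' : x ∈ Submonoid.closure (T : Set K) := by
    rw [← closure_toSubmonoid_of_isOfFinOrder hfin]
    exact hx
  obtain ⟨a, rfl⟩ := Submonoid.mem_closure_finset'.1 hx'
  simp only [coe_image, coe_univ, Set.image_univ, Set.mem_range]
  exact ⟨fun t => ⟨a t % L, Nat.mod_lt _ hL⟩,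
    prod_congr rfl fun t _ => (pow_eq_pow_mod _ (hexp t)).symm⟩

theorem MonoidHom.exists_finset_card_le_pow_forall_mem {H K : Type*} [Group H] [CommGroup K]
    {L : ℕ} (hL : 0 < L) (hexp : ∀ g : K, g ^ L = 1) (φ : H →* K) {S : Finset H}
    (hS : Subgroup.closure (S : Set H) = ⊤) :
    ∃ F : Finset K, #F ≤ L ^ #S ∧ ∀ h, φ h ∈ F := by
  classical
  obtain ⟨F, hFcard, hF⟩ :=
    Subgroup.exists_finset_card_le_pow_closure_subset hL hexp (S.image φ)
  refine ⟨F, hFcard.trans (Nat.pow_le_pow_right hL card_image_le), fun h => hF ?_⟩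
  rw [coe_image, ← MonoidHom.map_closure, hS]
  exact ⟨h, trivial, rfl⟩

theorem Finset.sum_ite_le_sum_sum_ite {α β M : Type*} [AddCommMonoid M] [PartialOrder M]
    [IsOrderedAddMonoid M] [CanonicallyOrderedAdd M] {P : β → Prop} [DecidablePred P]
    {Q : α → β → Prop} [∀ a, DecidablePred (Q a)] (F : Finset α) (s : Finset β) (w : β → M)
    (hPQ : ∀ b, P b → ∃ a ∈ F, Q a b) :
    ∑ b ∈ s, (if P b then w b else 0) ≤ ∑ a ∈ F, ∑ b ∈ s, if Q a b then w b else 0 := by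
  rw [sum_comm]
  refine sum_le_sum fun b _ => ?_
  split_ifs with hb
  · obtain ⟨a, ha, hab⟩ := hPQ b hb
    calc w b = if Q a b then w b else 0 := (if_pos hab).symm
      _ ≤ ∑ a ∈ F, if Q a b then w b else 0 :=
        single_le_sum (f := fun a => if Q a b then w b else 0) (fun _ _ => zero_le) ha
  · exact zero_le

theorem Fintype.sum_ite_forall_prod_eq_prod_sum {ι R : Type*} [Fintype ι] [DecidableEq ι]
    [CommSemiring R] {κ : ι → Type*} [∀ i, Fintype (κ i)] (P : ∀ i, κ i → Prop)
    [∀ i, DecidablePred (P i)] (f : ∀ i, κ i → R) :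
    ∑ x : ∀ i, κ i, (if ∀ i, P i (x i) then ∏ i, f i (x i) else 0)
      = ∏ i, ∑ j, if P i j then f i j else 0 := by
  simp only [Fintype.prod_sum, prod_ite_zero]

theorem Finset.card_filter_mem_powersetCard_mul_card {α : Type*} [DecidableEq α]
    {s : Finset α} {a : α} (ha : a ∈ s) (m : ℕ) :
    #{t ∈ s.powersetCard m | a ∈ t} * #s = m * (#s).choose m := by
  cases m with
  | zero => simp
  | succ k =>
    obtain ⟨n, hn⟩ := Nat.exists_eq_add_one_of_ne_zero (card_ne_zero_of_mem ha)
    have hcount := card_filter_powersetCard_subset {a} s (k + 1) (by simpa) (by simp)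
    simp only [singleton_subset_iff, card_singleton] at hcount
    rw [hcount, hn, Nat.add_sub_cancel, Nat.add_sub_cancel, mul_comm, mul_comm (k + 1),
      Nat.add_one_mul_choose_eq]

theorem PMF.toOuterMeasure_uniformOfFinset_powersetCard_mem {α : Type*} [Fintype α]
    [DecidableEq α] {m : ℕ} (h : (powersetCard m (univ : Finset α)).Nonempty) (a : α) :
    (uniformOfFinset _ h).toOuterMeasure {t | a ∈ t} = m / Fintype.card α := by
  have hα : (Fintype.card α : ENNReal) ≠ 0 := by
    exact_mod_cast (Fintype.card_pos_iff.2 ⟨a⟩).ne'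
  have hchoose : (#(powersetCard m (univ : Finset α)) : ENNReal) ≠ 0 := by
    exact_mod_cast h.card_pos.ne'
  rw [toOuterMeasure_uniformOfFinset_apply, ENNReal.div_eq_div_iff hα (by simp) hchoose (by simp)]
  have hcard := card_filter_mem_powersetCard_mul_card (mem_univ a) m
  rw [card_univ] at hcard
  simp only [Set.mem_ofPred_eq, card_powersetCard, card_univ]
  norm_cast
  rw [mul_comm, hcard, mul_comm]

open scoped Classical

/-- Let `G i` (for `i` in a finite index set) be finite commutative groups with
`n i` elements, all of exponent dividing a positive integer `L`.  Let `H` be a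
commutative group generated by at most `r` elements and `φ : H →* ∏ i, G i` a
homomorphism.  For each `i` choose independently a subset `s i` of `G i` uniformly
at random among all `m i`-element subsets, where `1 ≤ m i ≤ n i`.  Then the
probability that some `h ∈ H` satisfies `φ h i ∈ s i` for every `i` is at most
`L ^ r * ∏ i, (m i / n i)`. -/
theorem stmt6 {ι : Type*} [Fintype ι] [DecidableEq ι] {G : ι → Type*}
    [∀ i, CommGroup (G i)] [∀ i, Fintype (G i)]
    (n m : ι → ℕ) (hn : ∀ i, Fintype.card (G i) = n i)
    (L : ℕ) (hL : 0 < L) (hexp : ∀ i, ∀ g : G i, g ^ L = 1)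
    {H : Type*} [CommGroup H] (r : ℕ) (S : Finset H) (hScard : S.card ≤ r)
    (hSgen : Subgroup.closure (S : Set H) = ⊤)
    (φ : H →* (∀ i, G i))
    (hmn : ∀ i, m i ≤ n i) :
    ∑ s : ∀ i, Finset (G i),
      (if ∃ h : H, ∀ i, φ h i ∈ s i then
        ∏ i, (PMF.uniformOfFinset ((Finset.univ : Finset (G i)).powersetCard (m i))
          (Finset.powersetCard_nonempty.2 (by simp [hn i, hmn i]))) (s i)
      else 0) ≤ (L : ENNReal) ^ r * ∏ i, (m i : ENNReal) / (n i) := by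
  set p : ∀ i, PMF (Finset (G i)) := fun i =>
    PMF.uniformOfFinset ((univ : Finset (G i)).powersetCard (m i))
      (powersetCard_nonempty.2 (by simp [hn i, hmn i]))
  obtain ⟨F, hFcard, hφF⟩ :=
    φ.exists_finset_card_le_pow_forall_mem hL (fun g => funext fun i => hexp i (g i)) hSgen
  have hmarginal : ∀ i (a : G i), ∑ t, (if a ∈ t then p i t else 0) = m i / n i := fun i a => by
    rw [← hn i, ← PMF.toOuterMeasure_uniformOfFinset_powersetCard_mem
      (powersetCard_nonempty.2 (by simp [hn i, hmn i])) a, PMF.toOuterMeasure_apply_fintype]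
    simp only [Set.indicator_apply, Set.mem_ofPred_eq, p]
  calc _ ≤ ∑ x ∈ F, ∑ s : ∀ i, Finset (G i), if ∀ i, x i ∈ s i then ∏ i, p i (s i) else 0 :=
        sum_ite_le_sum_sum_ite _ _ _ fun s ⟨h, hh⟩ => ⟨φ h, hφF h, hh⟩
    _ = ∑ x ∈ F, ∏ i, (m i : ENNReal) / n i := sum_congr rfl fun x _ => by
        rw [Fintype.sum_ite_forall_prod_eq_prod_sum (fun i t => x i ∈ t) fun i t => p i t]
        simp only [hmarginal]
    _ = #F * ∏ i, (m i : ENNReal) / n i := by rw [sum_const, nsmul_eq_mul]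
    _ ≤ (L : ENNReal) ^ r * ∏ i, (m i : ENNReal) / (n i) := by
        gcongr
        exact_mod_cast hFcard.trans (Nat.pow_le_pow_right hL hScard)
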